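/- For every n ≥ 1, the Jaconian set of J_n(1) has cardinality at most 3: #𝕁(J_n(1)) ≤ 3. -/

import Mathlib

/-!
Since `d⁻(j) + f(j) = j`, the degree of `v_j` in `J_n(1)` is `min j (n - f j)`, so a vertex of
maximum degree `Δ` has `j = Δ` or `f j = n - Δ`; it remains to see that every fibre of `f` has at
most two elements, i.e. `f j < f (j + 2)`. Comparing the defining counts shows that `f` is
monotone with steps of at most one. Hence shifting by one maps the in-neighbours of `v_{j+2}`
other than `v_{j+1}` into those of `v_j`, so `d⁻(j + 2) ≤ d⁻(j) + 1`.
-/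

/-- The Jaco out-degree function `f`: `f 0 = 0` and, for `n ≥ 1`,
`f n = n - #{k : 1 ≤ k < n ∧ k + f k ≥ n}` (the out-degree of `v_n` in `J_∞(1)`). -/
def jacoF : ℕ → ℕ
  | 0 => 0
  | n + 1 =>
    (n + 1) - ((Finset.range (n + 1)).attach.filter
      (fun a => 1 ≤ a.1 ∧ n + 1 ≤ a.1 + jacoF a.1)).card
  decreasing_by all_goals exact Finset.mem_range.mp a.2

/-- The in-degree `d⁻(j) = #{i : 1 ≤ i < j ∧ j ≤ i + f i}` of `v_j` in `J_∞(1)`. -/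
def jacoDin (j : ℕ) : ℕ := ((Finset.Ico 1 j).filter (fun i => j ≤ i + jacoF i)).card

/-- The degree `d_n(j) = d⁻(j) + #{k : j < k ≤ n ∧ k ≤ j + f j}` of `v_j` in the
underlying undirected graph of the finite Jaco graph `J_n(1)`. -/
def jacoDeg (n j : ℕ) : ℕ :=
  jacoDin j + ((Finset.Ioc j n).filter (fun k => k ≤ j + jacoF j)).card

/-- The maximum degree `Δ(J_n(1)) = max_{1 ≤ j ≤ n} d_n(j)`. -/
def jacoDelta (n : ℕ) : ℕ := (Finset.Icc 1 n).sup (jacoDeg n)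

/-- The Jaconian set `𝕁(J_n(1)) = {j : 1 ≤ j ≤ n ∧ d_n(j) = Δ(J_n(1))}`. -/
def jacoJ (n : ℕ) : Finset ℕ := (Finset.Icc 1 n).filter (fun j => jacoDeg n j = jacoDelta n)

open Finset

theorem Finset.card_le_two_of_le_add_one {s : Finset ℕ}
    (h : ∀ a ∈ s, ∀ b ∈ s, a ≤ b → b ≤ a + 1) : #s ≤ 2 := by
  rcases s.eq_empty_or_nonempty with rfl | hs
  · simp
  have hsub : s ⊆ Icc (s.min' hs) (s.min' hs + 1) := fun b hb =>
    mem_Icc.2 ⟨s.min'_le b hb, h _ (s.min'_mem hs) b hb (s.min'_le b hb)⟩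
  have := card_le_card hsub
  rw [Nat.card_Icc] at this
  omega

theorem jacoF_eq_sub_jacoDin (m : ℕ) : jacoF m = m - jacoDin m := by
  match m with
  | 0 => simp [jacoF, jacoDin]
  | n + 1 =>
    rw [jacoF, jacoDin, filter_attach (fun a => 1 ≤ a ∧ n + 1 ≤ a + jacoF a), card_map,
      card_attach, range_eq_Ico]
    congr 2
    ext a
    simp only [mem_filter, mem_Ico]
    omega

theorem jacoDin_le_pred (m : ℕ) : jacoDin m ≤ m - 1 :=
  (card_filter_le _ _).trans (Nat.card_Ico 1 m).le

theorem jacoF_add_jacoDin (m : ℕ) : jacoF m + jacoDin m = m := by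
  have := jacoF_eq_sub_jacoDin m
  have := jacoDin_le_pred m
  omega

theorem jacoF_le_self (m : ℕ) : jacoF m ≤ m :=
  (Nat.le_add_right _ _).trans_eq (jacoF_add_jacoDin m)

theorem jacoDin_succ_le (n : ℕ) : jacoDin (n + 1) ≤ jacoDin n + 1 := by
  have hsub : (Ico 1 (n + 1)).filter (fun i => n + 1 ≤ i + jacoF i) ⊆
      insert n ((Ico 1 n).filter (fun i => n ≤ i + jacoF i)) := by
    intro i
    simp only [mem_filter, mem_Ico, mem_insert]
    omega
  exact (card_le_card hsub).trans (card_insert_le _ _)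

theorem jacoF_monotone : Monotone jacoF :=
  monotone_nat_of_le_succ fun n => by
    have := jacoF_add_jacoDin n
    have := jacoF_add_jacoDin (n + 1)
    have := jacoDin_succ_le n
    omega

theorem jacoDin_le_succ (n : ℕ) : jacoDin n ≤ jacoDin (n + 1) := by
  have hmaps : ((Ico 1 n).filter (fun i => n ≤ i + jacoF i)).image (· + 1) ⊆
      (Ico 1 (n + 1)).filter (fun i => n + 1 ≤ i + jacoF i) := by
    simp only [image_subset_iff, mem_filter, mem_Ico]
    intro i hi
    have := jacoF_monotone (Nat.le_add_right i 1)
    omega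
  rw [jacoDin, ← card_image_of_injective _ (add_left_injective 1)]
  exact card_le_card hmaps

theorem jacoF_succ_le (n : ℕ) : jacoF (n + 1) ≤ jacoF n + 1 := by
  have := jacoF_add_jacoDin n
  have := jacoF_add_jacoDin (n + 1)
  have := jacoDin_le_succ n
  omega

theorem jacoDin_add_two_le (j : ℕ) : jacoDin (j + 2) ≤ jacoDin j + 1 := by
  set S := (Ico 1 (j + 2)).filter (fun i => j + 2 ≤ i + jacoF i)
  have hmaps : Set.MapsTo (· - 1) (S.erase (j + 1))
      ((Ico 1 j).filter (fun i => j ≤ i + jacoF i)) := by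
    intro i hi
    simp only [S, coe_erase, coe_filter, Set.mem_sdiff, Set.mem_ofPred_eq, mem_Ico,
      Set.mem_singleton_iff] at hi
    have hself := jacoF_le_self i
    have hstep := jacoF_succ_le (i - 1)
    rw [Nat.sub_add_cancel (by omega)] at hstep
    simp only [coe_filter, Set.mem_ofPred_eq, mem_Ico]
    omega
  have hinj : Set.InjOn (· - 1) (S.erase (j + 1)) := by
    intro a ha b hb hab
    simp only [S, coe_erase, coe_filter, Set.mem_sdiff, Set.mem_ofPred_eq, mem_Ico] at ha hb
    simp only at hab
    omega
  have := card_le_card_of_injOn _ hmaps hinj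
  have := pred_card_le_card_erase (s := S) (a := j + 1)
  show #S ≤ #((Ico 1 j).filter (fun i => j ≤ i + jacoF i)) + 1
  omega

theorem jacoF_lt_add_two (j : ℕ) : jacoF j < jacoF (j + 2) := by
  have := jacoF_add_jacoDin j
  have := jacoF_add_jacoDin (j + 2)
  have := jacoDin_add_two_le j
  omega

theorem card_filter_jacoF_eq_le_two (s : Finset ℕ) (c : ℕ) :
    #(s.filter (jacoF · = c)) ≤ 2 := by
  refine card_le_two_of_le_add_one fun a ha b hb hab => ?_
  simp only [mem_filter] at ha hb
  by_contra! hlt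
  have := jacoF_lt_add_two a
  have := jacoF_monotone (show a + 2 ≤ b by omega)
  omega

theorem jacoDeg_eq_min {n j : ℕ} (hj : j ≤ n) : jacoDeg n j = min j (n - jacoF j) := by
  have hout : (Ioc j n).filter (fun k => k ≤ j + jacoF j) = Ioc j (min n (j + jacoF j)) := by
    ext k
    simp only [mem_filter, mem_Ioc, le_min_iff]
    omega
  rw [jacoDeg, hout, Nat.card_Ioc]
  have := jacoF_add_jacoDin j
  omega

theorem stmt_6_general (n : ℕ) : (jacoJ n).card ≤ 3 := by
  have hsub : jacoJ n ⊆
      insert (jacoDelta n) ((Icc 1 n).filter (jacoF · = n - jacoDelta n)) := by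
    intro j hj
    obtain ⟨hjn, hmax⟩ := mem_filter.1 hj
    have hjn' := mem_Icc.1 hjn
    rw [jacoDeg_eq_min hjn'.2] at hmax
    have := jacoF_le_self j
    simp only [mem_insert, mem_filter, hjn, true_and]
    omega
  calc #(jacoJ n) ≤ #((Icc 1 n).filter (jacoF · = n - jacoDelta n)) + 1 :=
        (card_le_card hsub).trans (card_insert_le _ _)
    _ ≤ 3 := by have := card_filter_jacoF_eq_le_two (Icc 1 n) (n - jacoDelta n); omega

/-- The Jaconian set of `J_n(1)` has cardinality at most 3. -/
theorem stmt_6 (n : ℕ) (hn : 1 ≤ n) : (jacoJ n).card ≤ 3 :=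
  stmt_6_general n
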